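/- Let ψ : ℝ → ℂ be integrable and let 𝓕ψ(ξ) = ∫ ψ(s)·exp(−2πi ξ s) ds denote its Fourier integral. Let f, φ be real numbers and define y(t) = cos(2πft + φ). If 𝓕ψ(−f) = 0, then for every real t the convolution integral ∫ y(s)·ψ(t−s) ds converges and equals (1/2)·𝓕ψ(f)·exp(i(2πft + φ)). -/

import Mathlib

open Complex MeasureTheory Real

open scoped FourierTransform

/-!
Each character `s ↦ 𝐞 (ξ s)` is an eigenfunction of convolution with `ψ`, with eigenvalue
`𝓕 ψ ξ`. Euler's formula splits the real sinusoid into the characters at `f` and `-f`, and the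
hypothesis `𝓕 ψ (-f) = 0` kills the second one.
-/

section ConvolutionWithCharacter

variable {E : Type*} [NormedAddCommGroup E] [NormedSpace ℂ E]

theorem integrable_fourierChar_smul_comp_sub {ψ : ℝ → E} (hψ : Integrable ψ) (ξ t : ℝ) :
    Integrable (fun s ↦ 𝐞 (ξ * s) • ψ (t - s)) :=
  (hψ.comp_sub_left t).mono
    ((by fun_prop : Continuous fun s ↦ 𝐞 (ξ * s)).aestronglyMeasurable.smul
      (hψ.comp_sub_left t).aestronglyMeasurable)
    (.of_forall fun s ↦ by simp)

theorem integral_fourierChar_smul_comp_sub (ψ : ℝ → E) (ξ t : ℝ) :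
    ∫ s, 𝐞 (ξ * s) • ψ (t - s) = 𝐞 (ξ * t) • 𝓕 ψ ξ := by
  rw [← integral_sub_left_eq_self _ volume t, Real.fourier_real_eq]
  simp_rw [Circle.smul_def, sub_sub_cancel]
  rw [← integral_smul]
  congr 1 with u
  rw [smul_smul, ← Circle.coe_mul, ← AddChar.map_add_eq_mul]
  ring_nf

end ConvolutionWithCharacter

theorem fourierChar_mul_cexp (x φ : ℝ) :
    (𝐞 x : ℂ) * cexp (φ * I) = cexp (↑(2 * π * x + φ) * I) := by
  rw [Real.fourierChar_apply, ← Complex.exp_add]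
  push_cast
  ring_nf

theorem ofReal_cos_eq_fourierChar (x φ : ℝ) :
    (Real.cos (2 * π * x + φ) : ℂ) = (𝐞 x * cexp (φ * I) + 𝐞 (-x) * cexp (↑(-φ) * I)) / 2 := by
  rw [fourierChar_mul_cexp, fourierChar_mul_cexp, ofReal_cos, Complex.cos]
  push_cast
  ring_nf

theorem fourier_eq_integral_mul_cexp (ψ : ℝ → ℂ) (ξ : ℝ) :
    𝓕 ψ ξ = ∫ s, ψ s * cexp (-↑(2 * π * ξ * s) * I) := by
  rw [Real.fourier_real_eq_integral_exp_smul]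
  congr 1 with s
  rw [smul_eq_mul, mul_comm]
  push_cast
  ring_nf

theorem conv_cos_with_analytic_filter
    (ψ : ℝ → ℂ) (hψ : Integrable ψ)
    (F : ℝ → ℂ)
    (hF : ∀ ξ : ℝ, F ξ = ∫ s : ℝ, ψ s * Complex.exp (-(((2 * π * ξ * s : ℝ)) : ℂ) * Complex.I))
    (f φ : ℝ) (y : ℝ → ℝ) (hy : ∀ t : ℝ, y t = Real.cos (2 * π * f * t + φ))
    (hanalytic : F (-f) = 0) (t : ℝ) :
    Integrable (fun s : ℝ => (y s : ℂ) * ψ (t - s)) ∧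
    (∫ s : ℝ, (y s : ℂ) * ψ (t - s))
      = (1 / 2 : ℂ) * F f * Complex.exp (((2 * π * f * t + φ : ℝ) : ℂ) * Complex.I) := by
  have hF_eq (ξ : ℝ) : F ξ = 𝓕 ψ ξ := by rw [hF, fourier_eq_integral_mul_cexp]
  set a : ℂ := cexp (φ * I) / 2
  set b : ℂ := cexp (↑(-φ) * I) / 2
  have h_split : (fun s ↦ (y s : ℂ) * ψ (t - s)) =
      fun s ↦ a • (𝐞 (f * s) • ψ (t - s)) + b • (𝐞 (-f * s) • ψ (t - s)) := by
    ext s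
    rw [hy, mul_assoc, ofReal_cos_eq_fourierChar, neg_mul]
    simp only [a, b, Circle.smul_def, smul_eq_mul]
    ring
  have h_int (c : ℂ) (ξ : ℝ) : Integrable fun s ↦ c • (𝐞 (ξ * s) • ψ (t - s)) :=
    (integrable_fourierChar_smul_comp_sub hψ ξ t).smul c
  refine ⟨h_split ▸ (h_int a f).add (h_int b (-f)), ?_⟩
  rw [h_split, integral_add (h_int a f) (h_int b (-f)), integral_smul,
    integral_smul, integral_fourierChar_smul_comp_sub, integral_fourierChar_smul_comp_sub,
    ← hF_eq, ← hF_eq, hanalytic, smul_zero, smul_zero, add_zero,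
    mul_assoc (2 * π) f t, ← fourierChar_mul_cexp]
  simp_rw [Circle.smul_def, smul_eq_mul, a]
  ring
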